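/- Let f: ℝⁿ → ℝ be convex, twice continuously differentiable, with M-Lipschitz Hessian. Define ψ(σ, y) = (1/σ)‖(∇²f(y) + σI)^{-1}∇f(y)‖. Then for any y, ȳ ∈ ℝⁿ and σ > 0: |ψ(σ,y) − ψ(σ,ȳ)| ≤ (1/σ)‖y−ȳ‖ + (M/σ²)‖y−ȳ‖² + (2M/σ)‖y−ȳ‖·ψ(σ,y). -/

import Mathlib

/-!
Let `H = ∇²f(ȳ)`, which is positive semidefinite by convexity, and `u = y - ȳ`. Subtracting the
two Newton equations gives `(H + σ)(d̄ - d) = H u + w`, where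
`w = (∇f(y) - ∇f(ȳ) - H u) + (∇²f(y) - H) d` has norm at most `M‖u‖² + M‖u‖‖d‖` by the
Lipschitz bound on the Hessian. Since `H ⪰ 0`, the operator `(H + σ)⁻¹` has norm at most `1/σ`
and `(H + σ)⁻¹ H` has norm at most `1`, so `‖d̄ - d‖ ≤ ‖u‖ + ‖w‖ / σ`. This is the claim with
`M / σ` in place of the coefficient `2M / σ` of the last term.
-/

open Set
open scoped RealInnerProductSpace

section InnerProductSpace

variable {E : Type*} [NormedAddCommGroup E] [InnerProductSpace ℝ E]

theorem norm_le_norm_add_of_inner_nonneg {x y : E} (h : 0 ≤ ⟪x, y⟫) : ‖x‖ ≤ ‖x + y‖ := by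
  have hsq : ‖x‖ ^ 2 ≤ ‖x + y‖ ^ 2 := by
    rw [norm_add_sq_real]
    nlinarith [sq_nonneg ‖y‖]
  exact (sq_le_sq₀ (norm_nonneg _) (norm_nonneg _)).mp hsq

theorem norm_le_norm_add_smul_of_inner_nonneg {x v : E} {σ : ℝ} (h : 0 ≤ ⟪x, v⟫) (hσ : 0 ≤ σ) :
    ‖x‖ ≤ ‖x + σ • v‖ :=
  norm_le_norm_add_of_inner_nonneg (by rw [real_inner_smul_right]; positivity)

theorem mul_norm_le_norm_add_smul_of_inner_nonneg {x v : E} {σ : ℝ} (h : 0 ≤ ⟪x, v⟫)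
    (hσ : 0 ≤ σ) : σ * ‖v‖ ≤ ‖x + σ • v‖ := by
  have hinner : 0 ≤ ⟪σ • v, x⟫ := by rw [real_inner_smul_left, real_inner_comm]; positivity
  calc σ * ‖v‖ = ‖σ • v‖ := by rw [norm_smul, Real.norm_of_nonneg hσ]
    _ ≤ ‖σ • v + x‖ := norm_le_norm_add_of_inner_nonneg hinner
    _ = ‖x + σ • v‖ := by rw [add_comm]

variable [FiniteDimensional ℝ E] {T : E →ₗ[ℝ] E} {σ : ℝ}

theorem exists_add_smul_eq_of_inner_nonneg (hT : ∀ v, 0 ≤ ⟪T v, v⟫) (hσ : 0 < σ) (u : E) :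
    ∃ v, T v + σ • v = u := by
  have hinj : Function.Injective (T + σ • LinearMap.id : E →ₗ[ℝ] E) := by
    refine (injective_iff_map_eq_zero _).mpr fun v hv => norm_le_zero_iff.mp ?_
    have hbound := mul_norm_le_norm_add_smul_of_inner_nonneg (hT v) hσ.le
    simp only [LinearMap.add_apply, LinearMap.smul_apply, LinearMap.id_apply] at hv
    rw [hv, norm_zero] at hbound
    nlinarith [norm_nonneg v]
  exact LinearMap.injective_iff_surjective.mp hinj u

theorem norm_le_of_add_smul_eq (hT : ∀ v, 0 ≤ ⟪T v, v⟫) (hσ : 0 < σ) {e u w : E}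
    (h : T e + σ • e = T u + w) : ‖e‖ ≤ ‖u‖ + ‖w‖ / σ := by
  obtain ⟨v, hv⟩ := exists_add_smul_eq_of_inner_nonneg hT hσ u
  have hTv : ‖T v‖ ≤ ‖u‖ := hv ▸ norm_le_norm_add_smul_of_inner_nonneg (hT v) hσ.le
  have hrest : T (e - T v) + σ • (e - T v) = w := by
    rw [map_sub, smul_sub, sub_add_sub_comm, h, ← hv, map_add, map_smul]
    abel
  have hrest_le : ‖e - T v‖ ≤ ‖w‖ / σ := by
    rw [le_div_iff₀' hσ, ← hrest]
    exact mul_norm_le_norm_add_smul_of_inner_nonneg (hT _) hσ.le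
  calc ‖e‖ = ‖T v + (e - T v)‖ := by rw [add_sub_cancel]
    _ ≤ ‖T v‖ + ‖e - T v‖ := norm_add_le _ _
    _ ≤ ‖u‖ + ‖w‖ / σ := add_le_add hTv hrest_le

end InnerProductSpace

theorem norm_sub_sub_fderiv_le_of_lipschitz {E F : Type*} [NormedAddCommGroup E]
    [NormedSpace ℝ E] [NormedAddCommGroup F] [NormedSpace ℝ F] {g : E → F} {M : ℝ}
    (hM : 0 ≤ M) (hg : Differentiable ℝ g) {x : E}
    (hLip : ∀ z, ‖fderiv ℝ g z - fderiv ℝ g x‖ ≤ M * ‖z - x‖) (y : E) :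
    ‖g y - g x - fderiv ℝ g x (y - x)‖ ≤ M * ‖y - x‖ ^ 2 := by
  have hbound : ∀ z ∈ Metric.closedBall x ‖y - x‖, ‖fderiv ℝ g z - fderiv ℝ g x‖ ≤ M * ‖y - x‖ :=
    fun z hz => (hLip z).trans (mul_le_mul_of_nonneg_left (mem_closedBall_iff_norm.mp hz) hM)
  have hy : y ∈ Metric.closedBall x ‖y - x‖ := mem_closedBall_iff_norm.mpr le_rfl
  calc ‖g y - g x - fderiv ℝ g x (y - x)‖ ≤ M * ‖y - x‖ * ‖y - x‖ :=
        (convex_closedBall x _).norm_image_sub_le_of_norm_fderiv_le' (fun z _ => hg z) hbound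
          (Metric.mem_closedBall_self (norm_nonneg _)) hy
    _ = M * ‖y - x‖ ^ 2 := by ring

section Gradient

variable {E : Type*} [NormedAddCommGroup E] [InnerProductSpace ℝ E] [CompleteSpace E]

theorem ContDiff.differentiable_gradient {f : E → ℝ} (hf : ContDiff ℝ 2 f) :
    Differentiable ℝ (gradient f) :=
  ((InnerProductSpace.toDual ℝ E).symm.contDiff.comp
    (hf.fderiv_right (m := 1) le_rfl)).differentiable one_ne_zero

/-- Restricted to the line `t ↦ x + t • v`, the map `t ↦ ⟪∇f(x + t • v), v⟫` is the derivative
of a convex function of one variable, hence monotone; its derivative at `0` is `⟪∇²f(x) v, v⟫`. -/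
theorem ConvexOn.inner_fderiv_gradient_self_nonneg {f : E → ℝ} (hconv : ConvexOn ℝ univ f)
    (hf : Differentiable ℝ f) {x : E} (hg : DifferentiableAt ℝ (gradient f) x) (v : E) :
    0 ≤ ⟪fderiv ℝ (gradient f) x v, v⟫ := by
  have hline : ∀ t : ℝ, HasDerivAt (fun t : ℝ => x + t • v) v t := fun t => by
    simpa using ((hasDerivAt_id t).smul_const v).const_add x
  have hq : ∀ t, HasDerivAt (fun t : ℝ => f (x + t • v)) ⟪gradient f (x + t • v), v⟫ t :=
    fun t => by
      have := (hf _).hasFDerivAt.comp_hasDerivAt t (hline t)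
      rwa [← inner_gradient_left] at this
  have hq_conv : ConvexOn ℝ univ fun t : ℝ => f (x + t • v) := by
    have hcomp : f ∘ AffineMap.lineMap x (x + v) = fun t : ℝ => f (x + t • v) := by
      ext t
      simp [AffineMap.lineMap_apply, add_comm]
    simpa [hcomp] using hconv.comp_affineMap (AffineMap.lineMap x (x + v))
  have hmono : Monotone fun t : ℝ => ⟪gradient f (x + t • v), v⟫ := by
    have := hq_conv.monotoneOn_deriv fun t _ => (hq t).differentiableAt
    rwa [monotoneOn_univ, funext fun t => (hq t).deriv] at this
  have hderiv : HasDerivAt (fun t : ℝ => ⟪gradient f (x + t • v), v⟫)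
      ⟪fderiv ℝ (gradient f) x v, v⟫ 0 := by
    have := (hg.hasFDerivAt.comp_hasDerivAt_of_eq 0 (hline 0) (by simp)).inner ℝ
      (hasDerivAt_const (0 : ℝ) v)
    simpa using this
  exact hderiv.nonneg_of_monotone hmono

end Gradient

/-- Perturbation bound for `ψ(σ,y) = (1/σ)‖(∇²f(y)+σI)⁻¹∇f(y)‖`, stated via the
regularized Newton steps `d` and `d̄` at `y` and `ȳ`:
`|ψ(σ,y) − ψ(σ,ȳ)| ≤ (1/σ)‖y−ȳ‖ + (M/σ²)‖y−ȳ‖² + (2M/σ)‖y−ȳ‖ ψ(σ,y)`. -/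
theorem stmt15 {n : ℕ} (f : EuclideanSpace ℝ (Fin n) → ℝ) (M σ : ℝ)
    (y ybar d dbar : EuclideanSpace ℝ (Fin n))
    (hf : ContDiff ℝ 2 f) (hconv : ConvexOn ℝ Set.univ f) (hM : 0 < M) (hσ : 0 < σ)
    (hLip : ∀ u v : EuclideanSpace ℝ (Fin n),
      ‖fderiv ℝ (gradient f) u - fderiv ℝ (gradient f) v‖ ≤ M * ‖u - v‖)
    (hd : (fderiv ℝ (gradient f) y) d + σ • d = - gradient f y)
    (hdbar : (fderiv ℝ (gradient f) ybar) dbar + σ • dbar = - gradient f ybar) :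
    |‖d‖ / σ - ‖dbar‖ / σ| ≤
      1 / σ * ‖y - ybar‖ + M / σ ^ 2 * ‖y - ybar‖ ^ 2
        + 2 * M / σ * ‖y - ybar‖ * (‖d‖ / σ) := by
  set H := fderiv ℝ (gradient f) ybar
  have hgrad := hf.differentiable_gradient
  have hH : ∀ v, 0 ≤ ⟪H v, v⟫ :=
    hconv.inner_fderiv_gradient_self_nonneg (hf.differentiable two_ne_zero) (hgrad ybar)
  set w := (gradient f y - gradient f ybar - H (y - ybar)) + (fderiv ℝ (gradient f) y - H) d
  have hnewton : H (dbar - d) + σ • (dbar - d) = H (y - ybar) + w := by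
    simp only [w, map_sub, sub_apply]
    linear_combination (norm := module) hdbar - hd
  have hw : ‖w‖ ≤ M * ‖y - ybar‖ ^ 2 + M * ‖y - ybar‖ * ‖d‖ :=
    (norm_add_le _ _).trans <| add_le_add
      (norm_sub_sub_fderiv_le_of_lipschitz hM.le hgrad (fun z => hLip z ybar) y)
      (((fderiv ℝ (gradient f) y - H).le_opNorm d).trans
        (mul_le_mul_of_nonneg_right (hLip y ybar) (norm_nonneg d)))
  have hstep : ‖dbar - d‖ ≤ ‖y - ybar‖ + ‖w‖ / σ :=
    norm_le_of_add_smul_eq (T := (H : _ →ₗ[ℝ] _)) hH hσ hnewton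
  have hdiff : |‖d‖ - ‖dbar‖| ≤ ‖dbar - d‖ := norm_sub_rev d dbar ▸ abs_norm_sub_norm_le d dbar
  rw [← sub_div, abs_div, abs_of_pos hσ, div_le_iff₀ hσ]
  calc |‖d‖ - ‖dbar‖| ≤ ‖y - ybar‖ + (M * ‖y - ybar‖ ^ 2 + M * ‖y - ybar‖ * ‖d‖) / σ :=
        hdiff.trans (hstep.trans (by gcongr))
    _ ≤ _ := by
      have hslack : 0 ≤ M * ‖y - ybar‖ * ‖d‖ := by positivity
      field_simp
      nlinarith
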